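/- Let X be a totally ordered set and F : X^n → X (n ≥ 3) an n-associative, idempotent, nondecreasing function. Define H : X^{n-1} → X by H(x_1,...,x_{n-1}) = F(x_1, x_1, x_2,...,x_{n-1}). Then H is (n-1)-associative, idempotent, and nondecreasing. -/

import Mathlib

/-- `innerApp n F x i` is `F (x i, x (i+1), ..., x (i+n-1))`. -/
def innerApp {X : Type*} (n : ℕ) (F : (Fin n → X) → X) (x : ℕ → X) (i : ℕ) : X :=
  F (fun k => x (i + (k : ℕ)))

/-- `compApp n F x i` is `F (x 0, ..., x (i-1), F (x i, ..., x (i+n-1)), x (i+n), ..., x (2n-2))`,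
i.e. `F` applied to the `(2n-1)`-tuple `x 0, ..., x (2n-2)` with the inner `F` at position `i`. -/
def compApp {X : Type*} (n : ℕ) (F : (Fin n → X) → X) (x : ℕ → X) (i : ℕ) : X :=
  F (fun j => if (j : ℕ) < i then x (j : ℕ)
      else if (j : ℕ) = i then innerApp n F x i
      else x ((j : ℕ) + n - 1))

/-- `F` is `n`-associative. -/
def NAssoc {X : Type*} (n : ℕ) (F : (Fin n → X) → X) : Prop :=
  ∀ (x : ℕ → X) (i : ℕ), i ≤ n - 1 → compApp n F x i = compApp n F x 0

/-- `F` is idempotent. -/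
def Idem {X : Type*} (n : ℕ) (F : (Fin n → X) → X) : Prop :=
  ∀ a : X, F (fun _ => a) = a

/-- `F` is nondecreasing in each variable. -/
def Nondecr {X : Type*} [Preorder X] (n : ℕ) (F : (Fin n → X) → X) : Prop :=
  ∀ x y : Fin n → X, (∀ j, x j ≤ y j) → F x ≤ F y

/-- `F` is monotone: every unary section is order-preserving or order-reversing. -/
def MonoSec {X : Type*} [Preorder X] (n : ℕ) (F : (Fin n → X) → X) : Prop :=
  ∀ (i : Fin n) (a : Fin n → X),
    Monotone (fun t => F (Function.update a i t)) ∨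
      Antitone (fun t => F (Function.update a i t))

/-- `F` is quasitrivial. -/
def Quasitrivial {X : Type*} (n : ℕ) (F : (Fin n → X) → X) : Prop :=
  ∀ x : Fin n → X, ∃ j, F x = x j

/-- `F` is symmetric. -/
def Symm {X : Type*} (n : ℕ) (F : (Fin n → X) → X) : Prop :=
  ∀ (σ : Equiv.Perm (Fin n)) (x : Fin n → X), F (x ∘ σ) = F x

/-- `iterComp G x k = x 0 ∘ x 1 ∘ ... ∘ x k` where `a ∘ b = G a b`. -/
def iterComp {X : Type*} (G : X → X → X) (x : ℕ → X) : ℕ → X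
  | 0 => x 0
  | k+1 => G (iterComp G x k) (x (k+1))

/-- `F` is derived from the binary operation `G`:
`F (x 0, ..., x (n-1)) = x 0 ∘ x 1 ∘ ... ∘ x (n-1)`. -/
def DerivedFrom {X : Type*} (n : ℕ) (F : (Fin n → X) → X) (G : X → X → X) : Prop :=
  ∀ x : ℕ → X, F (fun j => x (j : ℕ)) = iterComp G x (n - 1)

/-- `e` is a neutral element of the `n`-ary operation `F`. -/
def NeutralN {X : Type*} (n : ℕ) (F : (Fin n → X) → X) (e : X) : Prop :=
  ∀ (i : Fin n) (x : X), F (fun j => if j = i then x else e) = x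

/-!
Let `a ≤ b` be adjacent arguments of `F`, with `b` not the last one. Monotonicity gives
`F(…, a, a, b, …) ≤ F(…, a, b, b, …)`. Conversely, by idempotency and `n`-associativity,
`F(…, a, b, b, …) = F(…, a^n, b, b, …) = F(…, a, F(a^(n-1), b), b, …)`, which monotonicity bounds by
`F(…, a, F(a, b^(n-1)), b, …) = F(…, a, a, b^n, …) = F(…, a, a, b, …)`; the case `b ≤ a` is the same
argument in the order dual. So `H` may be evaluated by doubling any of its arguments.

The `(2n-1)`-tuple obtained from `x 0, …, x (2n-4)` by doubling `x i` and `x (i+n-1)` then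
exhibits both `H(…, H(x i, …), x (i+n-1), …)` and `H(…, x i, H(x (i+1), …), …)` as bracketings
of `F`, at positions `i` and `i + 2`, so `n`-associativity of `F` moves the inner bracket of `H`
by one place.
-/

section Doubling

variable {X : Type*}

def doubleAt (x : ℕ → X) (j : ℕ) : ℕ → X := fun k => if k ≤ j then x k else x (k - 1)

def doubledApp (n : ℕ) (F : (Fin n → X) → X) (x : ℕ → X) (j : ℕ) : X :=
  F fun k => doubleAt x j k

def twoBlocks (x : ℕ → X) (j p q : ℕ) : ℕ → X := fun k =>
  if k < j then x k else if k < j + p then x j else if k < j + p + q then x (j + 1)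
  else x (k + 2 - p - q)

theorem doubleAt_zero (x : ℕ → X) : doubleAt x 0 = fun k => x (k - 1) := by
  funext k
  rcases Nat.eq_zero_or_pos k with rfl | hk
  · rfl
  · simp [doubleAt, Nat.pos_iff_ne_zero.mp hk]

theorem doubleAt_eq_twoBlocks (x : ℕ → X) (j : ℕ) : doubleAt x j = twoBlocks x j 2 1 := by
  funext k
  simp only [doubleAt, twoBlocks]
  split_ifs <;> first | rfl | omega | (congr 1; omega)

theorem doubleAt_succ_eq_twoBlocks (x : ℕ → X) (j : ℕ) :
    doubleAt x (j + 1) = twoBlocks x j 1 2 := by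
  funext k
  simp only [doubleAt, twoBlocks]
  split_ifs <;> first | rfl | omega | (congr 1; omega)

theorem twoBlocks_le_twoBlocks [Preorder X] {x : ℕ → X} {j p q p' q' : ℕ}
    (hx : x j ≤ x (j + 1)) (hp : p' ≤ p) (hpq : p + q = p' + q') (k : ℕ) :
    twoBlocks x j p q k ≤ twoBlocks x j p' q' k := by
  simp only [twoBlocks]
  split_ifs <;> first | exact le_rfl | exact hx | omega | exact le_of_eq (congrArg x (by omega))

theorem NAssoc.compApp_eq {n : ℕ} {F : (Fin n → X) → X} (hA : NAssoc n F) (x : ℕ → X)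
    {i i' : ℕ} (hi : i ≤ n - 1) (hi' : i' ≤ n - 1) : compApp n F x i = compApp n F x i' :=
  (hA x i hi).trans (hA x i' hi').symm

theorem compApp_twoBlocks_left {n : ℕ} {F : (Fin n → X) → X} (hI : Idem n F)
    (x : ℕ → X) (j p q : ℕ) :
    compApp n F (twoBlocks x j (n + p) q) j = F fun k => twoBlocks x j (p + 1) q k := by
  have hinner : innerApp n F (twoBlocks x j (n + p) q) j = x j := by
    refine Eq.trans (congrArg F (funext fun k => ?_)) (hI (x j))
    have := k.isLt
    simp only [twoBlocks]
    split_ifs <;> first | rfl | omega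
  unfold compApp
  refine congrArg F (funext fun k => ?_)
  rw [hinner]
  simp only [twoBlocks]
  split_ifs <;> first | rfl | omega | (congr 1; omega)

theorem compApp_twoBlocks_right {n : ℕ} {F : (Fin n → X) → X} (hI : Idem n F)
    (x : ℕ → X) (j p q : ℕ) :
    compApp n F (twoBlocks x j p (n + q)) (j + p) = F fun k => twoBlocks x j p (q + 1) k := by
  have hinner : innerApp n F (twoBlocks x j p (n + q)) (j + p) = x (j + 1) := by
    refine Eq.trans (congrArg F (funext fun k => ?_)) (hI (x (j + 1)))
    have := k.isLt
    simp only [twoBlocks]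
    split_ifs <;> first | rfl | omega
  unfold compApp
  refine congrArg F (funext fun k => ?_)
  rw [hinner]
  simp only [twoBlocks]
  split_ifs <;> first | rfl | omega | (congr 1; omega)

theorem Nondecr.compApp_mono [Preorder X] {n : ℕ} {F : (Fin n → X) → X} (hM : Nondecr n F)
    {x y : ℕ → X} (hxy : ∀ k, x k ≤ y k) (i : ℕ) : compApp n F x i ≤ compApp n F y i := by
  refine hM _ _ fun k => ?_
  split_ifs
  · exact hxy _
  · exact hM _ _ fun _ => hxy _
  · exact hxy _

theorem Nondecr.dual [Preorder X] {n : ℕ} {F : (Fin n → X) → X} (hM : Nondecr n F) :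
    Nondecr (X := Xᵒᵈ) n F :=
  fun x y hxy => hM y x hxy

theorem doubledApp_le_succ [Preorder X] {n : ℕ} {F : (Fin n → X) → X} (hM : Nondecr n F)
    {x : ℕ → X} {j : ℕ} (hx : x j ≤ x (j + 1)) :
    doubledApp n F x j ≤ doubledApp n F x (j + 1) := by
  refine hM _ _ fun k => ?_
  rw [doubleAt_eq_twoBlocks, doubleAt_succ_eq_twoBlocks]
  exact twoBlocks_le_twoBlocks (p := 2) (q := 1) (p' := 1) (q' := 2) hx (by omega) rfl k

theorem doubledApp_succ_le [Preorder X] {n : ℕ} {F : (Fin n → X) → X} (hA : NAssoc n F)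
    (hI : Idem n F) (hM : Nondecr n F) {x : ℕ → X} {j : ℕ} (hj : j + 3 ≤ n)
    (hx : x j ≤ x (j + 1)) : doubledApp n F x (j + 1) ≤ doubledApp n F x j :=
  calc doubledApp n F x (j + 1)
      = F fun k => twoBlocks x j (0 + 1) 2 k := by rw [doubledApp, doubleAt_succ_eq_twoBlocks]
    _ = compApp n F (twoBlocks x j (n + 0) 2) j := (compApp_twoBlocks_left hI x j 0 2).symm
    _ = compApp n F (twoBlocks x j n 2) (j + 1) := hA.compApp_eq _ (by omega) (by omega)
    _ ≤ compApp n F (twoBlocks x j 2 n) (j + 1) :=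
        hM.compApp_mono (twoBlocks_le_twoBlocks hx (by omega) (by omega)) _
    _ = compApp n F (twoBlocks x j 2 (n + 0)) (j + 2) := hA.compApp_eq _ (by omega) (by omega)
    _ = F fun k => twoBlocks x j 2 (0 + 1) k := compApp_twoBlocks_right hI x j 2 0
    _ = doubledApp n F x j := by rw [doubledApp, doubleAt_eq_twoBlocks]

theorem doubledApp_succ [LinearOrder X] {n : ℕ} {F : (Fin n → X) → X} (hA : NAssoc n F)
    (hI : Idem n F) (hM : Nondecr n F) (x : ℕ → X) {j : ℕ} (hj : j + 3 ≤ n) :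
    doubledApp n F x (j + 1) = doubledApp n F x j := by
  rcases le_total (x j) (x (j + 1)) with hx | hx
  · exact (doubledApp_succ_le hA hI hM hj hx).antisymm (doubledApp_le_succ hM hx)
  · exact (doubledApp_succ_le (X := Xᵒᵈ) hA hI hM.dual hj hx).antisymm
      (doubledApp_le_succ (X := Xᵒᵈ) hM.dual hx)

theorem doubledApp_eq_zero [LinearOrder X] {n : ℕ} {F : (Fin n → X) → X} (hA : NAssoc n F)
    (hI : Idem n F) (hM : Nondecr n F) (x : ℕ → X) {j : ℕ} (hj : j ≤ n - 2) :
    doubledApp n F x j = doubledApp n F x 0 := by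
  induction j with
  | zero => rfl
  | succ j ih => rw [doubledApp_succ hA hI hM x (by omega), ih (by omega)]

end Doubling

section Reduction

variable {X : Type*}

def outerSeq (n : ℕ) (F : (Fin n → X) → X) (x : ℕ → X) (i : ℕ) : ℕ → X := fun p =>
  if p < i then x p else if p = i then innerApp n F x i else x (p + n - 1)

theorem compApp_eq_outerSeq (n : ℕ) (F : (Fin n → X) → X) (x : ℕ → X) (i : ℕ) :
    compApp n F x i = F fun j => outerSeq n F x i j :=
  rfl

variable {n : ℕ} {F : (Fin n → X) → X} {H : (Fin (n - 1) → X) → X}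

theorem compApp_doubleAt_doubleAt
    (hH : ∀ (y : ℕ → X) {j : ℕ}, j ≤ n - 2 → H (fun k => y k) = doubledApp n F y j)
    (x : ℕ → X) {i : ℕ} (hi : i + 3 ≤ n) :
    compApp n F (doubleAt (doubleAt x (i + n - 1)) i) i = compApp (n - 1) H x i := by
  have hinner : innerApp n F (doubleAt (doubleAt x (i + n - 1)) i) i =
      innerApp (n - 1) H x i := by
    refine Eq.trans (congrArg F (funext fun k => ?_))
      (hH (fun k => x (i + k)) (Nat.zero_le _)).symm
    have := k.isLt
    simp only [doubleAt]
    split_ifs <;> first | rfl | omega | (congr 1; omega)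
  rw [compApp_eq_outerSeq (n - 1), hH _ (j := i + 1) (by omega)]
  refine congrArg F (funext fun k => ?_)
  have := k.isLt
  simp only [outerSeq, hinner, doubleAt]
  split_ifs <;> first | rfl | omega | (congr 1; omega)

theorem compApp_doubleAt_doubleAt_add_two
    (hH : ∀ (y : ℕ → X) {j : ℕ}, j ≤ n - 2 → H (fun k => y k) = doubledApp n F y j)
    (x : ℕ → X) {i : ℕ} (hi : i + 3 ≤ n) :
    compApp n F (doubleAt (doubleAt x (i + n - 1)) i) (i + 2) =
      compApp (n - 1) H x (i + 1) := by
  have hinner : innerApp n F (doubleAt (doubleAt x (i + n - 1)) i) (i + 2) =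
      innerApp (n - 1) H x (i + 1) := by
    refine Eq.trans (congrArg F (funext fun k => ?_))
      (hH (fun k => x (i + 1 + k)) le_rfl).symm
    have := k.isLt
    simp only [doubleAt]
    split_ifs <;> first | rfl | omega | (congr 1; omega)
  rw [compApp_eq_outerSeq (n - 1), hH _ (j := i) (by omega)]
  refine congrArg F (funext fun k => ?_)
  have := k.isLt
  simp only [outerSeq, hinner, doubleAt]
  split_ifs <;> first | rfl | omega | (congr 1; omega)

theorem nAssoc_of_apply_eq_doubledApp (hA : NAssoc n F)
    (hH : ∀ (y : ℕ → X) {j : ℕ}, j ≤ n - 2 → H (fun k => y k) = doubledApp n F y j) :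
    NAssoc (n - 1) H := by
  intro x i hi
  induction i with
  | zero => rfl
  | succ i ih =>
    calc compApp (n - 1) H x (i + 1)
        = compApp n F (doubleAt (doubleAt x (i + n - 1)) i) (i + 2) :=
          (compApp_doubleAt_doubleAt_add_two hH x (by omega)).symm
      _ = compApp n F (doubleAt (doubleAt x (i + n - 1)) i) i :=
          hA.compApp_eq _ (by omega) (by omega)
      _ = compApp (n - 1) H x i := compApp_doubleAt_doubleAt hH x (by omega)
      _ = compApp (n - 1) H x 0 := ih (by omega)

end Reduction

theorem apply_eq_apply_pred {X : Type*} {n : ℕ} (hn : 2 ≤ n) {F : (Fin n → X) → X}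
    {H : (Fin (n - 1) → X) → X} (hH : ∀ y : ℕ → X, H (fun k => y k) = F fun k => y (k - 1))
    (z : Fin (n - 1) → X) : H z = F fun k => z ⟨k - 1, by omega⟩ := by
  convert hH fun k => z ⟨min k (n - 2), by omega⟩ using 1
  all_goals
    congr 1
    funext k
    exact congrArg z (Fin.ext (by simp only; omega))

theorem stmt7 {X : Type*} [LinearOrder X] (n : ℕ) (hn : 3 ≤ n)
    (F : (Fin n → X) → X) (hA : NAssoc n F) (hI : Idem n F) (hM : Nondecr n F)
    (H : (Fin (n - 1) → X) → X)
    (hH : ∀ y : ℕ → X, H (fun j => y (j : ℕ)) =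
      F (fun j => if (j : ℕ) = 0 then y 0 else y ((j : ℕ) - 1))) :
    NAssoc (n - 1) H ∧ Idem (n - 1) H ∧ Nondecr (n - 1) H := by
  have hpred : ∀ y : ℕ → X, H (fun k => y k) = F fun k => y (k - 1) := fun y => by
    rw [hH y]
    congr 1
    funext k
    split_ifs with hk <;> simp only [hk]
  have hdoubled : ∀ (y : ℕ → X) {j : ℕ}, j ≤ n - 2 → H (fun k => y k) = doubledApp n F y j :=
    fun y j hj => by rw [doubledApp_eq_zero hA hI hM y hj, hpred, doubledApp, doubleAt_zero]
  refine ⟨nAssoc_of_apply_eq_doubledApp hA hdoubled, fun a => ?_, fun x y hxy => ?_⟩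
  · rw [apply_eq_apply_pred (by omega) hpred]
    exact hI a
  · rw [apply_eq_apply_pred (by omega) hpred x, apply_eq_apply_pred (by omega) hpred y]
    exact hM _ _ fun k => hxy _
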